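/- Let M be a countable structure satisfying Hypothesis (H) with no algebraicity, and let Aut°(E_M) be the set of automorphisms of the orbital structure E_M which preserve each equivalence class of each orbital equivalence relation Eₙ. Then: (1) Aut°(E_M) = Aut(M); (2) Aut°(E_M) is a normal subgroup of Aut(E_M); (3) the bijection α ↦ f_α between topological automorphisms of Aut(M) and automorphisms of E^ex_M(1) ≅ E_M sends Inn(Aut(M)) onto Aut°(E_M); and (4) Out(Aut(M)) ≅ Aut(E_M)/Aut°(E_M), where Out denotes the quotient of the group of topological automorphisms of Aut(M) by the inner automorphisms. -/

import Mathlib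

open FirstOrder

namespace Paper

variable (L : FirstOrder.Language) (M : Type*) [L.Structure M]

/-- The group of automorphisms of a first-order structure, with composition. -/
instance autGroup : Group (M ≃[L] M) where
  one := FirstOrder.Language.Equiv.refl L M
  mul f g := f.comp g
  inv := FirstOrder.Language.Equiv.symm
  mul_assoc _ _ _ := rfl
  one_mul f := FirstOrder.Language.Equiv.ext fun a => by
    show (FirstOrder.Language.Equiv.refl L M).comp f a = f a; simp
  mul_one f := FirstOrder.Language.Equiv.ext fun a => by
    show f.comp (FirstOrder.Language.Equiv.refl L M) a = f a; simp
  inv_mul_cancel f := FirstOrder.Language.Equiv.ext fun a => by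
    show f.symm.comp f a = FirstOrder.Language.Equiv.refl L M a; simp

@[simp] theorem aut_one_apply (a : M) : (1 : M ≃[L] M) a = a := by
  show FirstOrder.Language.Equiv.refl L M a = a; simp
@[simp] theorem aut_mul_apply (f g : M ≃[L] M) (a : M) : (f * g) a = f (g a) := rfl
@[simp] theorem aut_inv_apply (f : M ≃[L] M) (a : M) : f⁻¹ a = f.symm a := rfl
@[simp] theorem aut_coe_mul (f g : M ≃[L] M) : ⇑(f * g) = ⇑f ∘ ⇑g := rfl

/-- The natural action of the automorphism group on the structure. -/
instance autAction : MulAction (M ≃[L] M) M where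
  smul f a := f a
  one_smul _ := rfl
  mul_smul _ _ _ := rfl

@[simp] theorem aut_smul_def (f : M ≃[L] M) (a : M) : f • a = f a := rfl

/-- The topology of pointwise convergence on the automorphism group (the domain
being regarded as discrete). -/
instance autTopology : TopologicalSpace (M ≃[L] M) :=
  letI : TopologicalSpace M := ⊥
  TopologicalSpace.induced (fun g => (g : M → M)) Pi.topologicalSpace

/-- The pointwise stabilizer `G_(A)` of a set `A ⊆ M` in `Aut(M)`. -/
def pstab (A : Set M) : Subgroup (M ≃[L] M) where
  carrier := {g | ∀ a ∈ A, g a = a}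
  one_mem' := fun _ _ => rfl
  mul_mem' := by
    intro f g hf hg a ha
    simp only [Set.mem_setOf_eq] at *
    rw [aut_mul_apply, hg a ha, hf a ha]
  inv_mem' := by
    intro f hf a ha
    simp only [Set.mem_setOf_eq] at *
    rw [aut_inv_apply]
    conv_lhs => rw [← hf a ha]
    exact f.symm_apply_apply a

/-- The setwise stabilizer `G_{A}` of a set `A ⊆ M` in `Aut(M)`. -/
def sstab (A : Set M) : Subgroup (M ≃[L] M) where
  carrier := {g | g '' A = A}
  one_mem' := by
    simp only [Set.mem_setOf_eq]
    ext a; simp [Set.mem_image]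
  mul_mem' := by
    intro f g hf hg
    simp only [Set.mem_setOf_eq] at *
    rw [aut_coe_mul, Set.image_comp, hg, hf]
  inv_mem' := by
    intro f hf
    simp only [Set.mem_setOf_eq] at *
    conv_lhs => rw [← hf]
    rw [Set.image_image]
    ext a; constructor
    · rintro ⟨x, hx, rfl⟩
      simpa [f.symm_apply_apply] using hx
    · intro ha
      exact ⟨a, ha, f.symm_apply_apply a⟩

/-- The Galois-algebraic closure of `A ⊆ M`: the set of elements with finite orbit
under the pointwise stabilizer of `A`. -/
def aclg (A : Set M) : Set M :=
  {b | (MulAction.orbit (pstab L M A) b).Finite}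

/-- The Galois-definable closure of the empty set: elements fixed by every automorphism. -/
def dclg0 : Set M := {b | ∀ g : M ≃[L] M, g b = b}

/-- `p : K ≃ K'` is an isomorphism between the induced substructures on `K` and `K'`. -/
def IsPartialIso (K K' : Set M) (p : K ≃ K') : Prop :=
  (∀ {n : ℕ} (f : L.Functions n) (x : Fin n → K),
      ∃ h : FirstOrder.Language.Structure.funMap f (fun i => (x i : M)) ∈ K,
        (p ⟨FirstOrder.Language.Structure.funMap f (fun i => (x i : M)), h⟩ : M) =
          FirstOrder.Language.Structure.funMap f (fun i => (p (x i) : M))) ∧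
  (∀ {n : ℕ} (r : L.Relations n) (x : Fin n → K),
      FirstOrder.Language.Structure.RelMap r (fun i => (x i : M)) ↔
        FirstOrder.Language.Structure.RelMap r (fun i => (p (x i) : M)))

/-- `A(M)`: the collection of Galois-algebraic closures of finite subsets of `M`. -/
def AA : Set (Set M) := {K | ∃ A : Set M, A.Finite ∧ K = aclg L M A}

/-- Hypothesis (H). -/
structure HypH : Prop where
  countable : Countable M
  locallyFinite : ∀ A : Set M, A.Finite → (aclg L M A).Finite
  extendsIso : ∀ (K K' : Set M), K.Finite → K'.Finite →
    aclg L M K = K → aclg L M K' = K' → ∀ p : K ≃ K', IsPartialIso L M K K' p →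
      ∃ g : M ≃[L] M, ∀ a : K, g a = (p a : M)
  openSandwich : ∀ H : Subgroup (M ≃[L] M), IsOpen (H : Set (M ≃[L] M)) →
    ∃! K : Set M, K.Finite ∧ aclg L M K = K ∧ pstab L M K ≤ H ∧ H ≤ sstab L M K


/-- Generalized pointwise stabilizer `G_(K,L)`. -/
def genStab (K : Set M) (Lsub : Subgroup (Equiv.Perm K)) : Subgroup (M ≃[L] M) where
  carrier := {f | ∃ p ∈ Lsub, ∀ a : K, f a = (p a : M)}
  one_mem' := ⟨1, Lsub.one_mem, fun a => by simp⟩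
  mul_mem' := by
    rintro f g ⟨p, hp, hfp⟩ ⟨q, hq, hgq⟩
    refine ⟨p * q, Lsub.mul_mem hp hq, fun a => ?_⟩
    rw [aut_mul_apply, hgq a, hfp (q a)]
    rfl
  inv_mem' := by
    rintro f ⟨p, hp, hfp⟩
    refine ⟨p⁻¹, Lsub.inv_mem hp, fun a => ?_⟩
    have h1 : f ((p⁻¹ a : K) : M) = ((p (p⁻¹ a) : K) : M) := hfp _
    rw [← Equiv.Perm.mul_apply, mul_inv_cancel, Equiv.Perm.one_apply] at h1
    rw [aut_inv_apply, ← h1, FirstOrder.Language.Equiv.symm_apply_apply]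

/-- `GS(M)`: the collection of generalized pointwise stabilizers. -/
def GS : Set (Subgroup (M ≃[L] M)) :=
  {H | ∃ K ∈ AA L M, ∃ Lsub : Subgroup (Equiv.Perm K),
    (∀ p ∈ Lsub, IsPartialIso L M K K (p : K ≃ K)) ∧ H = genStab L M K Lsub}

/-- `PS(M)`: the collection of pointwise stabilizers of members of `A(M)`. -/
def PS : Set (Subgroup (M ≃[L] M)) := {H | ∃ K ∈ AA L M, H = pstab L M K}

/-- The lattice `A₊(M)`. -/
def Aplus : Set (Set M) := AA L M ∪ {dclg0 L M}

/-- Covering relation in `S`. -/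
def hasseCovers {α : Type*} (S : Set (Set α)) (A B : Set α) : Prop :=
  A ∈ S ∧ B ∈ S ∧ A ⊂ B ∧ ¬∃ C ∈ S, A ⊂ C ∧ C ⊂ B

/-- Adjacency in the Hasse diagram of `S`. -/
def hasseAdj {α : Type*} (S : Set (Set α)) (A B : Set α) : Prop :=
  hasseCovers S A B ∨ hasseCovers S B A

/-- `A_k(M)`: members of `A(M)` distinct from `dcl(∅)` at distance `≤ k` from the bottom
of the lattice `A₊(M)` in its Hasse diagram. -/
def Ak (k : ℕ) : Set (Set M) :=
  {K | K ∈ AA L M ∧ K ≠ dclg0 L M ∧ ∃ (j : ℕ) (c : Fin (j + 1) → Set M), j ≤ k ∧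
    c 0 = dclg0 L M ∧ c (Fin.last j) = K ∧
    ∀ i : Fin j, hasseAdj (Aplus L M) (c i.castSucc) (c i.succ)}

/-- `A_k(M)` for `k ≤ ω`, with `A_ω(M) = A(M)`. -/
def AkE (k : ℕ∞) : Set (Set M) :=
  match k with
  | ⊤ => AA L M
  | (k : ℕ) => Ak L M k

/-- `k_M`: the supremum of lengths of strict chains of Galois-algebraic closures of
singletons. -/
noncomputable def kM : ℕ∞ :=
  ⨆ k ∈ {k : ℕ | ∃ a : Fin k → M, ∀ i j : Fin k, i < j → aclg L M {a i} ⊂ aclg L M {a j}},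
    (k : ℕ∞)

/-- The domain of the expanded structure `E^ex_M(k)`: triples `(K, p, K')` with
`K, K' ∈ A_k(M)` and `p : K ≅ K'`. -/
structure ExTriple (k : ℕ∞) where
  K : Set M
  K' : Set M
  hK : K ∈ AkE L M k
  hK' : K' ∈ AkE L M k
  p : K ≃ K'
  iso : IsPartialIso L M K K' p

/-- The unary predicate of `E^ex_M(k)` holding of the identity triples. -/
def IsIdTriple {k : ℕ∞} (t : ExTriple L M k) : Prop :=
  t.K = t.K' ∧ ∀ a : t.K, (t.p a : M) = (a : M)

/-- The `n`-ary relation `E_n` of `E^ex_M(k)`. -/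
def ERel {k : ℕ∞} {n : ℕ} (x : Fin n → ExTriple L M k) : Prop :=
  ∃ g : M ≃[L] M, ∀ (i : Fin n) (a : (x i).K), g a = ((x i).p a : M)

/-- The binary relation `Dom` of `E^ex_M(k)`. -/
def DomRel {k : ℕ∞} (t s : ExTriple L M k) : Prop := IsIdTriple L M s ∧ s.K = t.K

/-- The binary relation `Cod` of `E^ex_M(k)`. -/
def CodRel {k : ℕ∞} (t s : ExTriple L M k) : Prop := IsIdTriple L M s ∧ s.K = t.K'

variable {L M}

/-- A bijection between the domains of `E^ex_M(k)` and `E^ex_N(k)` is an isomorphism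
if it preserves the identity-triple predicate, all the relations `E_n`, `Dom` and `Cod`. -/
def IsExIso {L' : FirstOrder.Language} {N : Type*} [L'.Structure N] {k : ℕ∞}
    (F : ExTriple L M k ≃ ExTriple L' N k) : Prop :=
  (∀ t, IsIdTriple L M t ↔ IsIdTriple L' N (F t)) ∧
  (∀ (n : ℕ) (x : Fin n → ExTriple L M k), ERel L M x ↔ ERel L' N (F ∘ x)) ∧
  (∀ t s, DomRel L M t s ↔ DomRel L' N (F t) (F s)) ∧
  (∀ t s, CodRel L M t s ↔ CodRel L' N (F t) (F s))

variable (L M)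

/-- The automorphism group of the expanded structure `E^ex_M(k)`. -/
def exAut (k : ℕ∞) : Subgroup (Equiv.Perm (ExTriple L M k)) where
  carrier := {σ | IsExIso (σ : ExTriple L M k ≃ ExTriple L M k)}
  one_mem' := by
    refine ⟨fun t => ?_, fun n x => ?_, fun t s => ?_, fun t s => ?_⟩ <;>
      simp [Equiv.Perm.coe_one, Function.comp_def]
  mul_mem' := by
    rintro σ τ ⟨hσ1, hσ2, hσ3, hσ4⟩ ⟨hτ1, hτ2, hτ3, hτ4⟩
    refine ⟨fun t => ?_, fun n x => ?_, fun t s => ?_, fun t s => ?_⟩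
    · exact (hτ1 t).trans (hσ1 (τ t))
    · exact (hτ2 n x).trans (hσ2 n (τ ∘ x))
    · exact (hτ3 t s).trans (hσ3 (τ t) (τ s))
    · exact (hτ4 t s).trans (hσ4 (τ t) (τ s))
  inv_mem' := by
    rintro σ ⟨hσ1, hσ2, hσ3, hσ4⟩
    refine ⟨fun t => ?_, fun n x => ?_, fun t s => ?_, fun t s => ?_⟩
    · have := hσ1 (σ⁻¹ t); simpa using this.symm
    · have := hσ2 n (⇑(σ⁻¹) ∘ x)
      have hx : ⇑σ ∘ ⇑(σ⁻¹) ∘ x = x := by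
        funext i; simp
      rw [hx] at this
      exact this.symm
    · have := hσ3 (σ⁻¹ t) (σ⁻¹ s); simpa using this.symm
    · have := hσ4 (σ⁻¹ t) (σ⁻¹ s); simpa using this.symm

/-- The subgroup of topological automorphisms of a topological group. -/
def topMulAut (G : Type*) [Group G] [TopologicalSpace G] : Subgroup (MulAut G) where
  carrier := {α | Continuous (α : G → G) ∧ Continuous (α.symm : G → G)}
  one_mem' := ⟨continuous_id, continuous_id⟩
  mul_mem' := by
    rintro α β ⟨hα1, hα2⟩ ⟨hβ1, hβ2⟩
    exact ⟨hα1.comp hβ1, hβ2.comp hα2⟩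
  inv_mem' := by
    rintro α ⟨h1, h2⟩
    exact ⟨h2, h1⟩

/-- A group isomorphism between topological groups which is a homeomorphism. -/
def IsTopIso {G H : Type*} [Group G] [Group H] [TopologicalSpace G] [TopologicalSpace H]
    (e : G ≃* H) : Prop :=
  Continuous (e : G → H) ∧ Continuous (e.symm : H → G)

/-- The natural homomorphism from `Aut(M)` to the symmetric group on `M`. -/
def toPerm : (M ≃[L] M) →* Equiv.Perm M where
  toFun g := g.toEquiv
  map_one' := rfl
  map_mul' f g := Equiv.ext fun _ => rfl

/-- The orbit equivalence relation on `n`-tuples. -/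
def orbRel (n : ℕ) (x y : Fin n → M) : Prop := ∃ g : M ≃[L] M, ∀ i, g (x i) = y i

/-- The automorphism group of the orbital structure `E_M`: permutations of `M`
preserving each orbit equivalence relation. -/
def autOrbital : Subgroup (Equiv.Perm M) where
  carrier := {f | ∀ (n : ℕ) (x y : Fin n → M),
    orbRel L M n x y ↔ orbRel L M n (f ∘ x) (f ∘ y)}
  one_mem' := by intro n x y; simp [Equiv.Perm.coe_one]
  mul_mem' := by
    intro f g hf hg n x y
    exact (hg n x y).trans (hf n (g ∘ x) (g ∘ y))
  inv_mem' := by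
    intro f hf n x y
    have := hf n (⇑(f⁻¹) ∘ x) (⇑(f⁻¹) ∘ y)
    have hx : ⇑f ∘ ⇑(f⁻¹) ∘ x = x := by funext i; simp
    have hy : ⇑f ∘ ⇑(f⁻¹) ∘ y = y := by funext i; simp
    rw [hx, hy] at this
    exact this.symm

/-- `Aut°(E_M)`: automorphisms of the orbital structure preserving each orbit
equivalence class. -/
def autOrbitalFix : Subgroup (Equiv.Perm M) where
  carrier := {f | f ∈ autOrbital L M ∧ ∀ (n : ℕ) (x : Fin n → M), orbRel L M n x (f ∘ x)}
  one_mem' := ⟨(autOrbital L M).one_mem, fun n x => ⟨1, fun i => by simp [Equiv.Perm.coe_one]⟩⟩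
  mul_mem' := by
    rintro f g ⟨hf, hf2⟩ ⟨hg, hg2⟩
    refine ⟨(autOrbital L M).mul_mem hf hg, fun n x => ?_⟩
    obtain ⟨a, ha⟩ := hg2 n x
    obtain ⟨b, hb⟩ := hf2 n (g ∘ x)
    exact ⟨b * a, fun i => by rw [aut_mul_apply, ha i, hb i]; rfl⟩
  inv_mem' := by
    rintro f ⟨hf, hf2⟩
    refine ⟨(autOrbital L M).inv_mem hf, fun n x => ?_⟩
    obtain ⟨a, ha⟩ := hf2 n (⇑(f⁻¹) ∘ x)
    refine ⟨a⁻¹, fun i => ?_⟩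
    have hi := ha i
    simp only [Function.comp_apply, ← Equiv.Perm.mul_apply, mul_inv_cancel, Equiv.Perm.one_apply] at hi
    rw [← hi, aut_inv_apply, FirstOrder.Language.Equiv.symm_apply_apply]
    rfl

/-- A homogeneous structure: isomorphisms between finite substructures extend to
automorphisms. -/
def Homogeneous : Prop :=
  ∀ (K K' : Set M), K.Finite → K'.Finite → ∀ p : K ≃ K',
    IsPartialIso L M K K' p → ∃ g : M ≃[L] M, ∀ a : K, g a = (p a : M)

/-- Weak elimination of imaginaries, phrased group-theoretically: every open subgroup is
sandwiched between the pointwise and setwise stabilizers of a unique smallest finite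
Galois-algebraically closed set. -/
def HasWEI : Prop :=
  ∀ H : Subgroup (M ≃[L] M), IsOpen (H : Set (M ≃[L] M)) →
    ∃ K : Set M, (K.Finite ∧ aclg L M K = K ∧ pstab L M K ≤ H ∧ H ≤ sstab L M K) ∧
      ∀ K' : Set M, (K'.Finite ∧ aclg L M K' = K' ∧ pstab L M K' ≤ H ∧ H ≤ sstab L M K') →
        K ⊆ K'

/-- No algebraicity: every finite set is Galois-algebraically closed. -/
def NoAlgebraicity : Prop := ∀ A : Set M, A.Finite → aclg L M A = A

/-- The small index property: every subgroup of index `< 2^ℵ₀` is open. -/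
def SIP : Prop :=
  ∀ H : Subgroup (M ≃[L] M), Cardinal.mk ((M ≃[L] M) ⧸ H) < Cardinal.continuum →
    IsOpen (H : Set (M ≃[L] M))

/-- An oligomorphic action: finitely many orbits on `n`-tuples for every `n`. -/
def Oligo (G : Type*) [Group G] (X : Type*) [MulAction G X] : Prop :=
  ∀ n : ℕ, Finite (MulAction.orbitRel.Quotient G (Fin n → X))

end Paper

namespace Paper

/-- ω-categoricity: `M` is, up to isomorphism, the unique countable model of its complete
first-order theory. -/
def IsOmegaCategorical (L : FirstOrder.Language) (M : Type w) [L.Structure M] : Prop :=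
  Countable M ∧ ∀ (N : Type w) (iN : L.Structure N), Countable N → Nonempty N →
    (@FirstOrder.Language.Theory.Model L N iN (L.completeTheory M)) →
      Nonempty (@FirstOrder.Language.Equiv L N M iN _)

/-!
Under (H) with no algebraicity, the point stabilizers `G_a` are exactly the open subgroups that
are maximal among open subgroups and contain no proper open subgroup of finite index: if
`G_(K) ≤ H ≤ G_{K}` is the sandwich of such an `H`, maximality gives `H = G_{K}`, finite index
gives `H = G_(K)`, and maximality again gives `H = G_b` for any `b ∈ K`. This description is
invariant under topological automorphisms `α` of `G = Aut(M)`, so `α(G_a) = G_{f_α(a)}` defines a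
permutation `f_α` of `M` with `α(g) = f_α g f_α⁻¹`. Hence `f_α` preserves the orbits on tuples,
`α ↦ f_α` is injective, and `α` is inner iff `f_α ∈ Aut(M)`. Conversely, a permutation preserving
every orbit on tuples agrees with an automorphism on every finite tuple and is therefore one; so
`Aut°(E_M) = Aut(M)` is normal in `Aut(E_M)`, and conjugation by `θ ∈ Aut(E_M)` is a topological
automorphism `α` of `G` with `f_α = θ`.
-/

section

universe u

variable {L : FirstOrder.Language} {M : Type*} [L.Structure M]

section Stabilizers

@[simp] theorem toPerm_apply (g : M ≃[L] M) (a : M) : toPerm L M g a = g a := rfl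

theorem toPerm_injective : Function.Injective (toPerm L M) := fun _ _ hfg =>
  FirstOrder.Language.Equiv.ext (Equiv.congr_fun hfg)

theorem toPerm_conj (k g : M ≃[L] M) :
    toPerm L M (MulAut.conj k g) = toPerm L M k * toPerm L M g * (toPerm L M k)⁻¹ := by
  simp only [MulAut.conj_apply, map_mul, map_inv]

theorem mem_pstab {A : Set M} {g : M ≃[L] M} : g ∈ pstab L M A ↔ ∀ a ∈ A, g a = a := Iff.rfl

theorem mem_pstab_singleton {a : M} {g : M ≃[L] M} : g ∈ pstab L M {a} ↔ g a = a := by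
  simp [mem_pstab]

theorem pstab_anti {A B : Set M} (hAB : A ⊆ B) : pstab L M B ≤ pstab L M A :=
  fun _ hg a ha => hg a (hAB ha)

theorem pstab_empty : pstab L M (∅ : Set M) = ⊤ :=
  eq_top_iff.2 fun _ _ _ ha => absurd ha (Set.notMem_empty _)

theorem pstab_eq_iInf (A : Set M) : pstab L M A = ⨅ a : A, pstab L M {(a : M)} := by
  ext g
  simp [Subgroup.mem_iInf, mem_pstab]

theorem pstab_le_sstab (A : Set M) : pstab L M A ≤ sstab L M A := by
  intro g hg
  change (⇑g) '' A = A
  exact (Set.image_congr fun a ha => hg a ha).trans (Set.image_id A)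

theorem sstab_singleton (a : M) : sstab L M {a} = pstab L M {a} := by
  refine le_antisymm (fun g hg => mem_pstab_singleton.2 ?_) (pstab_le_sstab _)
  have hg : (⇑g) '' {a} = {a} := hg
  rwa [Set.image_singleton, Set.singleton_eq_singleton_iff] at hg

theorem pstab_singleton_subgroupOf (H : Subgroup (M ≃[L] M)) (b : M) :
    (pstab L M {b}).subgroupOf H = MulAction.stabilizer H b := by
  ext g
  rw [Subgroup.mem_subgroupOf, mem_pstab_singleton, MulAction.mem_stabilizer_iff]
  rfl

theorem relIndex_pstab_singleton_ne_zero_iff {H : Subgroup (M ≃[L] M)} {b : M} :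
    (pstab L M {b}).relIndex H ≠ 0 ↔ (MulAction.orbit H b).Finite := by
  rw [Subgroup.relIndex, pstab_singleton_subgroupOf, Subgroup.index_ne_zero_iff_finite,
    ← Set.finite_coe_iff]
  exact (Equiv.finite_iff (MulAction.orbitEquivQuotientStabilizer H b)).symm

theorem mem_aclg_iff_relIndex_ne_zero {A : Set M} {b : M} :
    b ∈ aclg L M A ↔ (pstab L M {b}).relIndex (pstab L M A) ≠ 0 :=
  relIndex_pstab_singleton_ne_zero_iff.symm

theorem relIndex_pstab_sstab_ne_zero {K : Set M} (hK : K.Finite) :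
    (pstab L M K).relIndex (sstab L M K) ≠ 0 := by
  have : Finite K := hK.to_subtype
  rw [pstab_eq_iInf]
  refine Subgroup.relIndex_iInf_ne_zero fun k => relIndex_pstab_singleton_ne_zero_iff.2 ?_
  refine hK.subset ?_
  rintro _ ⟨g, rfl⟩
  have hg : (⇑(g : M ≃[L] M)) '' K = K := g.2
  exact hg.subset ⟨k, k.2, rfl⟩

theorem subset_aclg_of_le_sstab {A K : Set M} {D : Subgroup (M ≃[L] M)} (hK : K.Finite)
    (hDK : D ≤ sstab L M K) (hD : D.relIndex (pstab L M A) ≠ 0) : K ⊆ aclg L M A := by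
  intro k hk
  have hKD : (pstab L M K).relIndex D ≠ 0 :=
    mt (Subgroup.relIndex_eq_zero_of_le_right hDK) (relIndex_pstab_sstab_ne_zero hK)
  exact mem_aclg_iff_relIndex_ne_zero.2 <|
    mt (Subgroup.relIndex_eq_zero_of_le_left (pstab_anti (Set.singleton_subset_iff.2 hk)))
      (Subgroup.relIndex_ne_zero_trans hKD hD)

theorem subset_of_pstab_le_sstab (hnoalg : NoAlgebraicity L M) {A K : Set M} (hA : A.Finite)
    (hK : K.Finite) (hAK : pstab L M A ≤ sstab L M K) : K ⊆ A := by
  rw [← hnoalg A hA]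
  exact subset_aclg_of_le_sstab hK hAK (by simp)

theorem sstab_ne_top (hnoalg : NoAlgebraicity L M) {K : Set M} (hK : K.Finite)
    (hne : K.Nonempty) : sstab L M K ≠ ⊤ := fun htop =>
  hne.ne_empty <| Set.subset_empty_iff.1 <|
    subset_of_pstab_le_sstab hnoalg Set.finite_empty hK (htop ▸ le_top)

theorem pstab_ne_top (hnoalg : NoAlgebraicity L M) {K : Set M} (hK : K.Finite)
    (hne : K.Nonempty) : pstab L M K ≠ ⊤ := fun htop =>
  sstab_ne_top hnoalg hK hne (top_le_iff.1 (htop ▸ pstab_le_sstab K))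

theorem pstab_singleton_injective (hnoalg : NoAlgebraicity L M) :
    Function.Injective fun b : M => pstab L M {b} := fun b b' hbb' =>
  (subset_of_pstab_le_sstab hnoalg (Set.finite_singleton b) (Set.finite_singleton b')
    (hbb'.le.trans (pstab_le_sstab _)) rfl).symm

end Stabilizers

section Topology

theorem isOpen_preimage_apply (a : M) (S : Set M) :
    IsOpen ((fun g : M ≃[L] M => g a) ⁻¹' S) := by
  let : TopologicalSpace M := ⊥
  have : DiscreteTopology M := ⟨rfl⟩
  exact (isOpen_discrete S).preimage ((continuous_apply a).comp continuous_induced_dom)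

theorem isOpen_setOf_forall_apply_eq (k : M ≃[L] M) {A : Set M} (hA : A.Finite) :
    IsOpen {g : M ≃[L] M | ∀ a ∈ A, g a = k a} := by
  have : {g : M ≃[L] M | ∀ a ∈ A, g a = k a} = ⋂ a ∈ A, (fun g : M ≃[L] M => g a) ⁻¹' {k a} := by
    ext; simp
  rw [this]
  exact hA.isOpen_biInter fun a _ => isOpen_preimage_apply a _

theorem isOpen_pstab {A : Set M} (hA : A.Finite) : IsOpen (pstab L M A : Set (M ≃[L] M)) := by
  have h1 := isOpen_setOf_forall_apply_eq (1 : M ≃[L] M) hA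
  simp only [aut_one_apply] at h1
  exact h1

theorem isOpen_of_pstab_le {A : Set M} (hA : A.Finite) {H : Subgroup (M ≃[L] M)}
    (hAH : pstab L M A ≤ H) : IsOpen (H : Set (M ≃[L] M)) := by
  have : (H : Set (M ≃[L] M)) = ⋃ k ∈ H, {g : M ≃[L] M | ∀ a ∈ A, g a = k a} := by
    ext g
    simp only [SetLike.mem_coe, Set.mem_iUnion, Set.mem_ofPred_eq]
    refine ⟨fun hg => ⟨g, hg, fun _ _ => rfl⟩, fun ⟨k, hk, hgk⟩ => ?_⟩
    have : k⁻¹ * g ∈ H := hAH fun a ha => by simp [hgk a ha]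
    simpa using H.mul_mem hk this
  rw [this]
  exact isOpen_biUnion fun k _ => isOpen_setOf_forall_apply_eq k hA

theorem isOpen_sstab {K : Set M} (hK : K.Finite) : IsOpen (sstab L M K : Set (M ≃[L] M)) :=
  isOpen_of_pstab_le hK (pstab_le_sstab K)

theorem continuous_of_toPerm_eq {φ : (M ≃[L] M) → (M ≃[L] M)} (p q : Equiv.Perm M)
    (hφ : ∀ g, toPerm L M (φ g) = p * toPerm L M g * q) : Continuous φ := by
  let : TopologicalSpace M := ⊥
  refine continuous_induced_rng.2 (continuous_pi fun a => continuous_def.2 fun S _ => ?_)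
  have : (fun g => φ g a) ⁻¹' S = (fun g : M ≃[L] M => g (q a)) ⁻¹' (p ⁻¹' S) := by
    ext g; simp [← toPerm_apply (φ g), hφ]
  exact this ▸ isOpen_preimage_apply (q a) _

end Topology

section Pointlike

variable {G G' : Type*} [Group G] [TopologicalSpace G] [Group G'] [TopologicalSpace G']

structure IsPointlike (H : Subgroup G) : Prop where
  isOpen : IsOpen (H : Set G)
  ne_top : H ≠ ⊤
  eq_or_eq_top_of_le : ∀ ⦃H' : Subgroup G⦄, IsOpen (H' : Set G) → H ≤ H' → H' = H ∨ H' = ⊤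
  eq_of_relIndex_ne_zero :
    ∀ ⦃D : Subgroup G⦄, IsOpen (D : Set G) → D ≤ H → D.relIndex H ≠ 0 → D = H

theorem isOpen_map_of_continuous_symm (e : G ≃* G') (he : Continuous e.symm) {K : Subgroup G}
    (hK : IsOpen (K : Set G)) : IsOpen (K.map (e : G →* G') : Set G') := by
  rw [Subgroup.map_equiv_eq_comap_symm, Subgroup.coe_comap]
  exact hK.preimage he

theorem IsPointlike.map (e : G ≃* G') (he : Continuous e) (he' : Continuous e.symm)
    {H : Subgroup G} (hH : IsPointlike H) : IsPointlike (H.map (e : G →* G')) := by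
  have he'' : Continuous e.symm.symm := he
  have map_back : ∀ K : Subgroup G, (K.map (e : G →* G')).map (e.symm : G' →* G) = K :=
    fun K => (Subgroup.map_symm_eq_iff_map_eq _).2 rfl
  refine ⟨isOpen_map_of_continuous_symm e he' hH.isOpen, fun htop => ?_, fun H' hH' hle => ?_,
    fun D hD hle hfin => ?_⟩
  · rw [← map_back H, htop, Subgroup.map_top_of_surjective _ e.symm.surjective] at hH
    exact hH.ne_top rfl
  · have hle' : H ≤ H'.map (e.symm : G' →* G) := map_back H ▸ Subgroup.map_mono hle
    rcases hH.eq_or_eq_top_of_le (isOpen_map_of_continuous_symm e.symm he'' hH') hle' with h | h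
    · exact .inl ((Subgroup.map_symm_eq_iff_map_eq _).1 h).symm
    · rw [← (Subgroup.map_symm_eq_iff_map_eq _).1 h]
      exact .inr (Subgroup.map_top_of_surjective _ e.surjective)
  · have hle' : D.map (e.symm : G' →* G) ≤ H := map_back H ▸ Subgroup.map_mono hle
    have hfin' : (D.map (e.symm : G' →* G)).relIndex H ≠ 0 := by
      rwa [← map_back H, Subgroup.relIndex_map_map_of_injective _ _ e.symm.injective]
    exact ((Subgroup.map_symm_eq_iff_map_eq _).1
      (hH.eq_of_relIndex_ne_zero (isOpen_map_of_continuous_symm e.symm he'' hD) hle' hfin')).symm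

end Pointlike

section PointStabilizers

theorem isPointlike_pstab_singleton (h : HypH L M) (hnoalg : NoAlgebraicity L M) (a : M) :
    IsPointlike (pstab L M {a}) where
  isOpen := isOpen_pstab (Set.finite_singleton a)
  ne_top := pstab_ne_top hnoalg (Set.finite_singleton a) (Set.singleton_nonempty a)
  eq_or_eq_top_of_le H' hH' hle := by
    obtain ⟨K, ⟨hK, -, hK₁, hK₂⟩, -⟩ := h.openSandwich H' hH'
    rcases Set.subset_singleton_iff_eq.1 (subset_of_pstab_le_sstab hnoalg
      (Set.finite_singleton a) hK (hle.trans hK₂)) with rfl | rfl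
    · exact .inr (top_le_iff.1 (pstab_empty (L := L) (M := M) ▸ hK₁))
    · exact .inl (le_antisymm (sstab_singleton (L := L) a ▸ hK₂) hle)
  eq_of_relIndex_ne_zero D hD hle hfin := by
    obtain ⟨C, ⟨hC, -, hC₁, hC₂⟩, -⟩ := h.openSandwich D hD
    have hCa : C ⊆ {a} := by
      rw [← hnoalg {a} (Set.finite_singleton a)]
      exact subset_aclg_of_le_sstab hC hC₂ hfin
    rcases Set.subset_singleton_iff_eq.1 hCa with rfl | rfl
    · exact absurd (top_le_iff.1 ((pstab_empty (L := L) (M := M) ▸ hC₁).trans hle))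
        (pstab_ne_top hnoalg (Set.finite_singleton a) (Set.singleton_nonempty a))
    · exact le_antisymm hle hC₁

theorem exists_eq_pstab_singleton_of_isPointlike (h : HypH L M) (hnoalg : NoAlgebraicity L M)
    {H : Subgroup (M ≃[L] M)} (hH : IsPointlike H) : ∃ b, H = pstab L M {b} := by
  obtain ⟨K, ⟨hK, -, hK₁, hK₂⟩, -⟩ := h.openSandwich H hH.isOpen
  have hKne : K.Nonempty := Set.nonempty_iff_ne_empty.2 fun hK₀ =>
    hH.ne_top (top_le_iff.1 (pstab_empty (L := L) (M := M) ▸ hK₀ ▸ hK₁))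
  have hsstab : sstab L M K = H :=
    (hH.eq_or_eq_top_of_le (isOpen_sstab hK) hK₂).resolve_right (sstab_ne_top hnoalg hK hKne)
  have hpstab : pstab L M K = H :=
    hH.eq_of_relIndex_ne_zero (isOpen_pstab hK) hK₁ (hsstab ▸ relIndex_pstab_sstab_ne_zero hK)
  obtain ⟨b, hb⟩ := hKne
  have hle : H ≤ pstab L M {b} := hpstab ▸ pstab_anti (Set.singleton_subset_iff.2 hb)
  exact ⟨b, ((hH.eq_or_eq_top_of_le (isOpen_pstab (Set.finite_singleton b)) hle).resolve_right
    (pstab_ne_top hnoalg (Set.finite_singleton b) (Set.singleton_nonempty b))).symm⟩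

theorem map_pstab_singleton_of_toPerm_eq (φ : MulAut (M ≃[L] M)) {θ : Equiv.Perm M}
    (hφ : ∀ g, toPerm L M (φ g) = θ * toPerm L M g * θ⁻¹) (a : M) :
    (pstab L M {a}).map (φ : (M ≃[L] M) →* (M ≃[L] M)) = pstab L M {θ a} := by
  ext x
  have hx : x (θ a) = θ (φ.symm x a) := by
    simpa using Equiv.congr_fun (hφ (φ.symm x)) (θ a)
  rw [Subgroup.map_equiv_eq_comap_symm, Subgroup.mem_comap, mem_pstab_singleton,
    mem_pstab_singleton, hx, θ.injective.eq_iff]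
  rfl

theorem map_pstab_singleton_conj (k : M ≃[L] M) (a : M) :
    (pstab L M {a}).map (MulAut.conj k : (M ≃[L] M) →* (M ≃[L] M)) = pstab L M {k a} :=
  map_pstab_singleton_of_toPerm_eq _ (toPerm_conj k) a

end PointStabilizers

section PointMap

theorem exists_map_pstab_singleton (h : HypH L M) (hnoalg : NoAlgebraicity L M)
    (α : ↥(topMulAut (M ≃[L] M))) (a : M) :
    ∃ b, (pstab L M {a}).map ((α : MulAut (M ≃[L] M)) : (M ≃[L] M) →* (M ≃[L] M)) =
      pstab L M {b} :=
  exists_eq_pstab_singleton_of_isPointlike h hnoalg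
    ((isPointlike_pstab_singleton h hnoalg a).map _ α.2.1 α.2.2)

noncomputable def pointMap (h : HypH L M) (hnoalg : NoAlgebraicity L M)
    (α : ↥(topMulAut (M ≃[L] M))) (a : M) : M :=
  (exists_map_pstab_singleton h hnoalg α a).choose

theorem map_pstab_singleton (h : HypH L M) (hnoalg : NoAlgebraicity L M)
    (α : ↥(topMulAut (M ≃[L] M))) (a : M) :
    (pstab L M {a}).map ((α : MulAut (M ≃[L] M)) : (M ≃[L] M) →* (M ≃[L] M)) =
      pstab L M {pointMap h hnoalg α a} :=
  (exists_map_pstab_singleton h hnoalg α a).choose_spec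

theorem pointMap_eq_of_map_eq {h : HypH L M} {hnoalg : NoAlgebraicity L M}
    {α : ↥(topMulAut (M ≃[L] M))} {a b : M}
    (hab : (pstab L M {a}).map ((α : MulAut (M ≃[L] M)) : (M ≃[L] M) →* (M ≃[L] M)) =
      pstab L M {b}) :
    pointMap h hnoalg α a = b :=
  pstab_singleton_injective hnoalg ((map_pstab_singleton h hnoalg α a).symm.trans hab)

noncomputable def pointPerm (h : HypH L M) (hnoalg : NoAlgebraicity L M) :
    ↥(topMulAut (M ≃[L] M)) →* Equiv.Perm M :=
  letI : MulAction ↥(topMulAut (M ≃[L] M)) M :=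
    { smul := pointMap h hnoalg
      one_smul := fun a => pointMap_eq_of_map_eq (Subgroup.map_id _)
      mul_smul := fun α β a => pointMap_eq_of_map_eq <|
        show _ = pstab L M {pointMap h hnoalg α (pointMap h hnoalg β a)} by
          rw [← map_pstab_singleton, ← map_pstab_singleton, Subgroup.map_map]
          rfl }
  MulAction.toPermHom _ M

theorem pointPerm_apply (h : HypH L M) (hnoalg : NoAlgebraicity L M)
    (α : ↥(topMulAut (M ≃[L] M))) (a : M) :
    pointPerm h hnoalg α a = pointMap h hnoalg α a := rfl

theorem pointMap_apply (h : HypH L M) (hnoalg : NoAlgebraicity L M)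
    (α : ↥(topMulAut (M ≃[L] M))) (g : M ≃[L] M) (a : M) :
    pointMap h hnoalg α (g a) = (α : MulAut (M ≃[L] M)) g (pointMap h hnoalg α a) := by
  set φ : (M ≃[L] M) →* (M ≃[L] M) := ((α : MulAut (M ≃[L] M)) : (M ≃[L] M) →* (M ≃[L] M))
  have hcomm : φ.comp (MulAut.conj g : (M ≃[L] M) →* (M ≃[L] M)) =
      (MulAut.conj (φ g) : (M ≃[L] M) →* (M ≃[L] M)).comp φ := by
    ext x; simp [φ, MulAut.conj_apply]
  refine pointMap_eq_of_map_eq ?_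
  rw [← map_pstab_singleton_conj, Subgroup.map_map, hcomm, ← Subgroup.map_map,
    map_pstab_singleton, map_pstab_singleton_conj]
  rfl

theorem toPerm_map_eq_conj_pointPerm (h : HypH L M) (hnoalg : NoAlgebraicity L M)
    (α : ↥(topMulAut (M ≃[L] M))) (g : M ≃[L] M) :
    toPerm L M ((α : MulAut (M ≃[L] M)) g) =
      pointPerm h hnoalg α * toPerm L M g * (pointPerm h hnoalg α)⁻¹ := by
  ext b
  obtain ⟨a, rfl⟩ := (pointPerm h hnoalg α).surjective b
  rw [Equiv.Perm.mul_apply, Equiv.Perm.mul_apply, Equiv.Perm.inv_def, Equiv.symm_apply_apply,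
    toPerm_apply, toPerm_apply, pointPerm_apply, pointPerm_apply, pointMap_apply]

theorem pointPerm_eq_of_toPerm_eq {h : HypH L M} {hnoalg : NoAlgebraicity L M}
    {α : ↥(topMulAut (M ≃[L] M))} {θ : Equiv.Perm M}
    (hα : ∀ g, toPerm L M ((α : MulAut (M ≃[L] M)) g) = θ * toPerm L M g * θ⁻¹) :
    pointPerm h hnoalg α = θ :=
  Equiv.ext fun a => (pointPerm_apply h hnoalg α a).trans
    (pointMap_eq_of_map_eq (map_pstab_singleton_of_toPerm_eq _ hα a))

theorem pointPerm_injective (h : HypH L M) (hnoalg : NoAlgebraicity L M) :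
    Function.Injective (pointPerm h hnoalg) := fun α β hαβ =>
  Subtype.ext <| MulEquiv.ext fun g => toPerm_injective <| by
    rw [toPerm_map_eq_conj_pointPerm h hnoalg, toPerm_map_eq_conj_pointPerm h hnoalg, hαβ]

end PointMap

section Orbital

theorem mem_autOrbital_of_toPerm_eq (φ : MulAut (M ≃[L] M)) {θ : Equiv.Perm M}
    (hφ : ∀ g, toPerm L M (φ g) = θ * toPerm L M g * θ⁻¹) : θ ∈ autOrbital L M := by
  have hφθ : ∀ g a, φ g (θ a) = θ (g a) := fun g a => by
    simpa using Equiv.congr_fun (hφ g) (θ a)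
  intro n x y
  constructor
  · rintro ⟨g, hg⟩
    exact ⟨φ g, fun i => by simp [hφθ, hg i]⟩
  · rintro ⟨g, hg⟩
    refine ⟨φ.symm g, fun i => θ.injective ?_⟩
    rw [← hφθ, MulEquiv.apply_symm_apply]
    exact hg i

theorem toPerm_mem_autOrbitalFix (g : M ≃[L] M) : toPerm L M g ∈ autOrbitalFix L M :=
  ⟨mem_autOrbital_of_toPerm_eq (MulAut.conj g) (toPerm_conj g), fun _ _ => ⟨g, fun _ => rfl⟩⟩

theorem mem_range_toPerm_of_mem_autOrbitalFix {f : Equiv.Perm M} (hf : f ∈ autOrbitalFix L M) :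
    f ∈ (toPerm L M).range := by
  have agree : ∀ {n} (x : Fin n → M), ∃ g : M ≃[L] M, ⇑g ∘ x = ⇑f ∘ x :=
    fun x => (hf.2 _ x).imp fun _ hg => funext hg
  refine ⟨⟨f, fun {n} φ x => ?_, fun {n} r x => ?_⟩, rfl⟩
  · obtain ⟨g, hg⟩ := agree (Fin.snoc x (Language.Structure.funMap φ x))
    have hx : ⇑g ∘ x = ⇑f ∘ x := by
      simpa [Function.comp_assoc] using congrArg (· ∘ Fin.castSucc) hg
    have hφ : g (Language.Structure.funMap φ x) = f (Language.Structure.funMap φ x) := by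
      simpa using congrFun hg (Fin.last n)
    change f (Language.Structure.funMap φ x) = Language.Structure.funMap φ (⇑f ∘ x)
    rw [← hφ, ← hx, g.map_fun]
  · obtain ⟨g, hg⟩ := agree x
    change Language.Structure.RelMap r (⇑f ∘ x) ↔ Language.Structure.RelMap r x
    rw [← hg, g.map_rel]

theorem autOrbitalFix_eq_range : autOrbitalFix L M = (toPerm L M).range :=
  le_antisymm (fun _ hf => mem_range_toPerm_of_mem_autOrbitalFix hf)
    (by rintro _ ⟨g, rfl⟩; exact toPerm_mem_autOrbitalFix g)

theorem conj_mem_autOrbitalFix {θ p : Equiv.Perm M} (hθ : θ ∈ autOrbital L M)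
    (hp : p ∈ autOrbitalFix L M) : θ * p * θ⁻¹ ∈ autOrbitalFix L M := by
  have hθ' := (autOrbital L M).inv_mem hθ
  refine ⟨(autOrbital L M).mul_mem ((autOrbital L M).mul_mem hθ hp.1) hθ', fun n x => ?_⟩
  have h₁ := (hθ n _ _).1 (hp.2 n (⇑θ⁻¹ ∘ x))
  have h₂ : ⇑θ ∘ ⇑θ⁻¹ ∘ x = x := by ext; simp
  rwa [h₂] at h₁

theorem autOrbitalFix_subgroupOf_normal :
    ((autOrbitalFix L M).subgroupOf (autOrbital L M)).Normal :=
  ⟨fun _ hp θ => conj_mem_autOrbitalFix θ.2 hp⟩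

theorem exists_toPerm_eq_conj {θ : Equiv.Perm M} (hθ : θ ∈ autOrbital L M) (g : M ≃[L] M) :
    ∃ g', toPerm L M g' = θ * toPerm L M g * θ⁻¹ := by
  have := conj_mem_autOrbitalFix hθ (toPerm_mem_autOrbitalFix g)
  rwa [autOrbitalFix_eq_range] at this

noncomputable def conjFun (θ : ↥(autOrbital L M)) (g : M ≃[L] M) : M ≃[L] M :=
  (exists_toPerm_eq_conj θ.2 g).choose

theorem toPerm_conjFun (θ : ↥(autOrbital L M)) (g : M ≃[L] M) :
    toPerm L M (conjFun θ g) = θ * toPerm L M g * (θ : Equiv.Perm M)⁻¹ :=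
  (exists_toPerm_eq_conj θ.2 g).choose_spec

noncomputable def conjHom (θ : ↥(autOrbital L M)) : (M ≃[L] M) →* (M ≃[L] M) :=
  MonoidHom.mk' (conjFun θ) fun g g' => toPerm_injective <| by
    rw [map_mul, toPerm_conjFun, toPerm_conjFun, toPerm_conjFun, map_mul]
    group

theorem conjHom_comp_conjHom_inv (θ : ↥(autOrbital L M)) :
    (conjHom θ).comp (conjHom θ⁻¹) = MonoidHom.id _ :=
  MonoidHom.ext fun g => toPerm_injective <| by
    change toPerm L M (conjFun θ (conjFun θ⁻¹ g)) = toPerm L M g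
    rw [toPerm_conjFun, toPerm_conjFun, Subgroup.coe_inv]
    group

noncomputable def conjMulAut (θ : ↥(autOrbital L M)) : MulAut (M ≃[L] M) :=
  (conjHom θ).toMulEquiv (conjHom θ⁻¹) (by simpa using conjHom_comp_conjHom_inv θ⁻¹)
    (conjHom_comp_conjHom_inv θ)

theorem conjMulAut_mem_topMulAut (θ : ↥(autOrbital L M)) :
    conjMulAut θ ∈ topMulAut (M ≃[L] M) :=
  ⟨continuous_of_toPerm_eq _ _ (toPerm_conjFun θ),
    continuous_of_toPerm_eq _ _ (toPerm_conjFun θ⁻¹)⟩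

end Orbital

section Correspondence

theorem range_pointPerm (h : HypH L M) (hnoalg : NoAlgebraicity L M) :
    (pointPerm h hnoalg).range = autOrbital L M := by
  refine le_antisymm ?_ fun θ hθ => ?_
  · rintro _ ⟨α, rfl⟩
    exact mem_autOrbital_of_toPerm_eq _ (toPerm_map_eq_conj_pointPerm h hnoalg α)
  · exact ⟨⟨conjMulAut ⟨θ, hθ⟩, conjMulAut_mem_topMulAut _⟩,
      pointPerm_eq_of_toPerm_eq (toPerm_conjFun _)⟩

noncomputable def topMulAutEquivAutOrbital (h : HypH L M) (hnoalg : NoAlgebraicity L M) :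
    ↥(topMulAut (M ≃[L] M)) ≃* ↥(autOrbital L M) :=
  (MonoidHom.ofInjective (pointPerm_injective h hnoalg)).trans
    (MulEquiv.subgroupCongr (range_pointPerm h hnoalg))

theorem mem_range_conj_iff (h : HypH L M) (hnoalg : NoAlgebraicity L M)
    (α : ↥(topMulAut (M ≃[L] M))) :
    (α : MulAut (M ≃[L] M)) ∈ (MulAut.conj : (M ≃[L] M) →* MulAut (M ≃[L] M)).range ↔
      pointPerm h hnoalg α ∈ autOrbitalFix L M := by
  rw [autOrbitalFix_eq_range]
  constructor
  · rintro ⟨k, hk⟩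
    exact ⟨k, (pointPerm_eq_of_toPerm_eq (hk ▸ toPerm_conj k)).symm⟩
  · rintro ⟨k, hk⟩
    exact ⟨k, MulEquiv.ext fun g => toPerm_injective <| by
      rw [toPerm_conj, toPerm_map_eq_conj_pointPerm h hnoalg, hk]⟩

end Correspondence

theorem exists_quotients_of_mulEquiv {A B : Type*} [Group A] [Group B] (e : A ≃* B)
    {K : Subgroup A} {N : Subgroup B} [N.Normal] [hN : Small.{u} (B ⧸ N)]
    (hKN : ∀ a, a ∈ K ↔ e a ∈ N) :
    ∃ (Q : Type u) (_ : Group Q) (q₁ : A →* Q) (q₂ : B →* Q),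
      Function.Surjective q₁ ∧ Function.Surjective q₂ ∧ q₁.ker = K ∧ q₂.ker = N := by
  let q₂ : B →* Shrink.{u} (B ⧸ N) :=
    ((Shrink.mulEquiv : Shrink.{u} (B ⧸ N) ≃* B ⧸ N).symm : B ⧸ N →* _).comp (QuotientGroup.mk' N)
  have hq₂ : q₂.ker = N := by
    rw [MonoidHom.ker_mulEquiv_comp, QuotientGroup.ker_mk']
  refine ⟨_, inferInstance, q₂.comp (e : A →* B), q₂, ?_, ?_, ?_, hq₂⟩
  · exact (Shrink.mulEquiv.symm.surjective.comp (QuotientGroup.mk'_surjective N)).comp e.surjective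
  · exact Shrink.mulEquiv.symm.surjective.comp (QuotientGroup.mk'_surjective N)
  · ext a
    rw [← MonoidHom.comap_ker, hq₂, hKN]
    rfl

theorem small_quotient_autOrbital [Countable M] (N : Subgroup ↥(autOrbital L M)) :
    Small.{u} (↥(autOrbital L M) ⧸ N) := by
  have : Small.{0} (Equiv.Perm M) := small_of_injective Equiv.coe_fn_injective
  have : Small.{0} ↥(autOrbital L M) := small_of_injective Subtype.val_injective
  have : Small.{0} (↥(autOrbital L M) ⧸ N) := small_of_surjective QuotientGroup.mk_surjective
  exact small_lift _

end

/-- For `M` satisfying Hypothesis (H) with no algebraicity: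
(1) `Aut°(E_M) = Aut(M)`; (2) `Aut°(E_M) ⊴ Aut(E_M)`; (3) there is a group isomorphism
between the topological automorphism group of `Aut(M)` and `Aut(E_M)` sending the inner
automorphisms exactly onto `Aut°(E_M)`; (4) `Out(Aut(M)) ≅ Aut(E_M)/Aut°(E_M)`. -/
theorem stmt_19 (L : FirstOrder.Language) (M : Type*) [L.Structure M]
    (h : HypH L M) (hnoalg : NoAlgebraicity L M) :
    ((autOrbitalFix L M : Set (Equiv.Perm M)) = Set.range (toPerm L M)) ∧
    ((autOrbitalFix L M).subgroupOf (autOrbital L M)).Normal ∧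
    (∃ e : ↥(topMulAut (M ≃[L] M)) ≃* ↥(autOrbital L M),
      ∀ α : ↥(topMulAut (M ≃[L] M)),
        ((α : MulAut (M ≃[L] M)) ∈
            (MulAut.conj : (M ≃[L] M) →* MulAut (M ≃[L] M)).range ↔
          ((e α : Equiv.Perm M) ∈ autOrbitalFix L M))) ∧
    (∃ (Q : Type _) (_ : Group Q) (q₁ : ↥(topMulAut (M ≃[L] M)) →* Q)
        (q₂ : ↥(autOrbital L M) →* Q),
      Function.Surjective q₁ ∧ Function.Surjective q₂ ∧
      q₁.ker = ((MulAut.conj : (M ≃[L] M) →* MulAut (M ≃[L] M)).range).subgroupOf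
        (topMulAut (M ≃[L] M)) ∧
      q₂.ker = (autOrbitalFix L M).subgroupOf (autOrbital L M)) := by
  have : Countable M := h.countable
  have hnormal := autOrbitalFix_subgroupOf_normal (L := L) (M := M)
  let e := topMulAutEquivAutOrbital h hnoalg
  refine ⟨by rw [autOrbitalFix_eq_range, MonoidHom.coe_range], hnormal,
    ⟨e, mem_range_conj_iff h hnoalg⟩, ?_⟩
  refine exists_quotients_of_mulEquiv (hN := small_quotient_autOrbital _) e fun α => ?_
  rw [Subgroup.mem_subgroupOf, Subgroup.mem_subgroupOf]
  exact mem_range_conj_iff h hnoalg α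

end Paper
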